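/- (Real Representation Theorem) Let A be a commutative ring and T ⊆ A a weakly divisible archimedean semiring. If a ∈ A satisfies φ(a) > 0 for every ring homomorphism φ : A → ℝ with φ(T) ⊆ [0,∞), then a ∈ T. -/

import Mathlib

/-!
If `a ∉ T`, then `-1 ∉ T - T a`: otherwise `t a - 1 ∈ T` for some `t ∈ T`, and an approximation
argument using `1/r ∈ T` and the archimedean property forces `a ∈ T`. By Zorn's lemma `T - T a`
lies in a maximal `T`-module `Q` avoiding `-1`, and by the archimedean property `Q ∪ -Q = A`.
Cutting `A` along the `r`-adic rationals, `φ x = inf {k / r ^ m | k / r ^ m - x ∈ Q}` is then a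
ring homomorphism `A → ℝ` that is nonnegative on `Q ⊇ T`, while `φ a ≤ 0` since `-a ∈ Q`.
-/

open Filter Set

section

variable {A : Type*} [CommRing A]

theorem Nat.exists_pow_succ_le_succ_pow (s : ℕ) : ∃ n, s ^ (n + 1) ≤ (s + 1) ^ n := by
  rcases s.eq_zero_or_pos with rfl | hs
  · exact ⟨0, by simp⟩
  have hs' : (0 : ℝ) < s := by exact_mod_cast hs
  obtain ⟨n, hn⟩ := pow_unbounded_of_one_lt (s : ℝ) ((one_lt_div hs').2 (lt_add_one (s : ℝ)))
  rw [div_pow, lt_div_iff₀ (by positivity)] at hn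
  have : (s : ℝ) ^ (n + 1) ≤ ((s : ℝ) + 1) ^ n := by rw [_root_.pow_succ']; exact hn.le
  exact ⟨n, by exact_mod_cast this⟩

namespace Subsemiring

def IsArchimedean (S : Subsemiring A) : Prop := ∀ a : A, ∃ n : ℤ, ∃ t ∈ S, a = n + t

structure WeaklyDivisibleBy (S : Subsemiring A) (r : ℕ) (u : A) : Prop where
  one_lt : 1 < r
  natCast_mul : (r : A) * u = 1
  mem : u ∈ S

variable {S : Subsemiring A}

theorem WeaklyDivisibleBy.pos {r : ℕ} {u : A} (hd : S.WeaklyDivisibleBy r u) : 0 < r :=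
  zero_lt_one.trans hd.one_lt

theorem IsArchimedean.eventually_natCast_sub_mem (hS : S.IsArchimedean) (x : A) :
    ∀ᶠ N : ℕ in atTop, (N : A) - x ∈ S := by
  obtain ⟨n, t, ht, hx⟩ := hS (-x)
  filter_upwards [eventually_ge_atTop (-n).toNat] with N hN
  obtain ⟨k, hk⟩ : ∃ k : ℕ, (N : ℤ) + n = k := Int.eq_ofNat_of_zero_le (by omega)
  have hkA : (k : A) = N + n := by exact_mod_cast congrArg (Int.cast (R := A)) hk.symm
  have : (N : A) - x = k + t := by linear_combination hx - hkA
  exact this ▸ add_mem (natCast_mem S k) ht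

theorem pow_sub_pow_mem {x y : A} (hx : x ∈ S) (hy : y ∈ S) (hxy : x - y ∈ S) (n : ℕ) :
    x ^ n - y ^ n ∈ S := by
  induction n with
  | zero => simp
  | succ n ih =>
    have : x ^ (n + 1) - y ^ (n + 1) = x * (x ^ n - y ^ n) + y ^ n * (x - y) := by ring
    exact this ▸ add_mem (mul_mem hx ih) (mul_mem (pow_mem hy n) hxy)

theorem exists_sub_one_sub_pow_mem {ε : A} (hε : ε ∈ S) {s : ℕ} (hsε : ((s : A) + 1) * ε = 1) :
    ∃ n, ε - (1 - ε) ^ (n + 1) ∈ S := by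
  obtain ⟨n, hn⟩ := Nat.exists_pow_succ_le_succ_pow s
  have hε' : ε = ((s : A) + 1) ^ n * ε ^ (n + 1) :=
    calc ε = (((s : A) + 1) * ε) ^ n * ε := by rw [hsε, one_pow, one_mul]
      _ = ((s : A) + 1) ^ n * ε ^ (n + 1) := by rw [mul_pow, pow_succ]; ring
  have : ε - (1 - ε) ^ (n + 1) = (((s + 1) ^ n - s ^ (n + 1) : ℕ) : A) * ε ^ (n + 1) := by
    rw [show 1 - ε = s * ε by linear_combination -hsε, Nat.cast_sub hn]
    push_cast
    linear_combination hε'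
  exact ⟨n, this ▸ mul_mem (natCast_mem S _) (pow_mem hε _)⟩

theorem mul_one_sub_pow_sub_mem {t c ε : A} (ht : 1 - t ∈ S) (hε : ε ∈ S) (htc : t * c - ε ∈ S)
    (n : ℕ) : c * (1 - (1 - t) ^ (n + 1)) - ε ∈ S := by
  induction n with
  | zero => convert htc using 1; ring
  | succ n ih =>
    have : c * (1 - (1 - t) ^ (n + 2)) - ε = (c * (1 - (1 - t) ^ (n + 1)) - ε)
        + (1 - t) ^ (n + 1) * (t * c - ε) + (1 - t) ^ (n + 1) * ε := by ring
    exact this ▸ add_mem (add_mem ih (mul_mem (pow_mem ht _) htc)) (mul_mem (pow_mem ht _) hε)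

theorem mem_of_mul_sub_mem {t c ε : A} {s : ℕ} (hε : ε ∈ S) (hsε : ((s : A) + 1) * ε = 1)
    (ht : t ∈ S) (ht' : 1 - t ∈ S) (hc : 1 + c ∈ S) (hc' : 1 - c ∈ S) (htc : t * c - ε ∈ S) :
    c ∈ S := by
  obtain ⟨n, hn⟩ := exists_sub_one_sub_pow_mem hε hsε
  have hw : 1 - ε ∈ S := by
    rw [show 1 - ε = s * ε by linear_combination -hsε]
    exact mul_mem (natCast_mem S s) hε
  have hwt : (1 - ε) - (1 - t) ∈ S := by
    rw [show (1 - ε) - (1 - t) = t * (1 - c) + (t * c - ε) by ring]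
    exact add_mem (mul_mem ht hc') htc
  -- With `v = 1 - t` and `w = 1 - ε` we have `0 ≤ v ≤ w` and `w ^ (n + 1) ≤ ε`.
  have : c = (c * (1 - (1 - t) ^ (n + 1)) - ε) + (1 - t) ^ (n + 1) * (1 + c)
      + ((1 - ε) ^ (n + 1) - (1 - t) ^ (n + 1)) + (ε - (1 - ε) ^ (n + 1)) := by ring
  rw [this]
  exact add_mem (add_mem (add_mem (mul_one_sub_pow_sub_mem ht' hε htc n)
    (mul_mem (pow_mem ht' _) hc)) (pow_sub_pow_mem hw ht' hwt _)) hn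

theorem IsArchimedean.mem_of_mul_sub_one_mem (hS : S.IsArchimedean) {r : ℕ} {u : A}
    (hd : S.WeaklyDivisibleBy r u) {t c : A} (ht : t ∈ S) (htc : t * c - 1 ∈ S) : c ∈ S := by
  obtain ⟨hr, hru, hu⟩ := hd
  have hscale (x : A) : ∀ᶠ m in atTop, 1 - x * u ^ m ∈ S := by
    filter_upwards [(tendsto_pow_atTop_atTop_of_one_lt hr).eventually
      (hS.eventually_natCast_sub_mem x)] with m hm
    have : 1 - x * u ^ m = ((r ^ m : ℕ) - x) * u ^ m := by
      push_cast; rw [sub_mul, ← mul_pow, hru, one_pow]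
    exact this ▸ mul_mem hm (pow_mem hu m)
  -- Rescale so that `t ≤ 1` and `-1 ≤ c ≤ 1`.
  obtain ⟨m, hmt, hmc, hmc'⟩ := ((hscale t).and ((hscale c).and (hscale (-c)))).exists
  obtain ⟨s, hs⟩ : ∃ s : ℕ, r ^ (2 * m) = s + 1 := Nat.exists_eq_add_one.2 (by positivity)
  have hsε : ((s : A) + 1) * u ^ (2 * m) = 1 := by
    have : ((r ^ (2 * m) : ℕ) : A) = s + 1 := by rw [hs]; push_cast; ring
    rw [← this]; push_cast; rw [← mul_pow, hru, one_pow]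
  have hcu : c * u ^ m ∈ S := by
    refine mem_of_mul_sub_mem (pow_mem hu _) hsε (mul_mem ht (pow_mem hu m)) hmt
      (by rwa [neg_mul, sub_neg_eq_add] at hmc') hmc ?_
    rw [show t * u ^ m * (c * u ^ m) - u ^ (2 * m) = (t * c - 1) * u ^ (2 * m) by ring]
    exact mul_mem htc (pow_mem hu _)
  have : c = (r ^ m : ℕ) * (c * u ^ m) := by
    push_cast; rw [mul_left_comm, ← mul_pow, hru, one_pow, mul_one]
  exact this ▸ mul_mem (natCast_mem S _) hcu

end Subsemiring

theorem Submodule.exists_le_maximal_notMem {R M : Type*} [Semiring R] [AddCommMonoid M]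
    [Module R M] {P : Submodule R M} {x : M} (hx : x ∉ P) :
    ∃ Q, P ≤ Q ∧ Maximal (fun Q : Submodule R M ↦ x ∉ Q) Q := by
  refine zorn_le_nonempty₀ _ (fun c hc hchain Q hQ ↦ ⟨sSup c, ?_, fun _ ↦ le_sSup⟩) P hx
  show x ∉ sSup c
  rw [Submodule.mem_sSup_of_directed ⟨Q, hQ⟩ hchain.directedOn]
  rintro ⟨Q', hQ', hxQ'⟩
  exact hc hQ' hxQ'

namespace Submodule

variable {S : Subsemiring A} {Q : Submodule S A}

theorem mul_mem_of_mem {t x : A} (ht : t ∈ S) (hx : x ∈ Q) : t * x ∈ Q :=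
  Q.smul_mem ⟨t, ht⟩ hx

theorem mem_of_one_mem (h1 : (1 : A) ∈ Q) {t : A} (ht : t ∈ S) : t ∈ Q := by
  simpa using mul_mem_of_mem ht h1

structure IsTotalProper (Q : Submodule S A) : Prop where
  one_mem : (1 : A) ∈ Q
  neg_one_notMem : (-1 : A) ∉ Q
  mem_or_neg_mem (a : A) : a ∈ Q ∨ -a ∈ Q

theorem exists_add_mul_eq_neg_one_of_maximal
    (hQ : Maximal (fun Q : Submodule S A ↦ (-1 : A) ∉ Q) Q) {b : A} (hb : b ∉ Q) :
    ∃ q ∈ Q, ∃ t ∈ S, q + t * b = -1 := by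
  by_contra h
  refine hb (hQ.2 (fun hmem ↦ ?_) le_sup_left (mem_sup_right (mem_span_singleton_self b)))
  obtain ⟨q, hq, _, hz, hqz⟩ := mem_sup.1 hmem
  obtain ⟨t, rfl⟩ := mem_span_singleton.1 hz
  exact h ⟨q, hq, t, t.2, hqz⟩

theorem isTotalProper_of_maximal (hS : S.IsArchimedean) (h1 : (1 : A) ∈ Q)
    (hQ : Maximal (fun Q : Submodule S A ↦ (-1 : A) ∉ Q) Q) : Q.IsTotalProper := by
  refine ⟨h1, hQ.1, fun b ↦ ?_⟩
  by_contra! hb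
  obtain ⟨q, hq, t, ht, hbq⟩ := exists_add_mul_eq_neg_one_of_maximal hQ hb.1
  obtain ⟨q', hq', t', ht', hbq'⟩ := exists_add_mul_eq_neg_one_of_maximal hQ hb.2
  obtain ⟨N, hN, hN'⟩ :=
    ((hS.eventually_natCast_sub_mem b).and (hS.eventually_natCast_sub_mem (-b))).exists
  -- From `q + t b = -1 = q' - t' b` and `N ± b ∈ S`, eliminating `b` gives `-2 ∈ Q`.
  have : (-1 : A) = q + q' + t * (N - -b) + t' * (N - b) + N * (t' * q + t * q') + 1 := by
    linear_combination (-(1 + N * t')) * hbq + (-(1 + N * t)) * hbq'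
  refine hQ.1 (this ▸ add_mem (add_mem (add_mem (add_mem (add_mem hq hq') ?_) ?_) ?_) h1)
  · exact mem_of_one_mem h1 (S.mul_mem ht hN')
  · exact mem_of_one_mem h1 (S.mul_mem ht' hN)
  · exact mul_mem_of_mem (natCast_mem S N)
      (add_mem (mul_mem_of_mem ht' hq) (mul_mem_of_mem ht hq'))

end Submodule

theorem DenseRange.mem_of_forall_gt {α ι : Type*} [TopologicalSpace α] [LinearOrder α]
    [OrderTopology α] [DenselyOrdered α] [NoMaxOrder α] {f : ι → α} (hf : DenseRange f)
    {s : Set α} (hs : IsClosed s) {x : α} (h : ∀ i, x < f i → f i ∈ s) : x ∈ s := by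
  have hIoi : Ioi x ⊆ s := (hf.open_subset_closure_inter isOpen_Ioi).trans <|
    hs.closure_subset_iff.2 fun _ ⟨hy, i, hi⟩ ↦ hi ▸ h i (hi ▸ hy)
  exact hs.closure_subset_iff.2 hIoi (closure_Ioi x ▸ self_mem_Ici)

theorem DenseRange.mem_of_forall_lt {α ι : Type*} [TopologicalSpace α] [LinearOrder α]
    [OrderTopology α] [DenselyOrdered α] [NoMinOrder α] {f : ι → α} (hf : DenseRange f)
    {s : Set α} (hs : IsClosed s) {x : α} (h : ∀ i, f i < x → f i ∈ s) : x ∈ s := by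
  have hIio : Iio x ⊆ s := (hf.open_subset_closure_inter isOpen_Iio).trans <|
    hs.closure_subset_iff.2 fun _ ⟨hy, i, hi⟩ ↦ hi ▸ h i (hi ▸ hy)
  exact hs.closure_subset_iff.2 hIio (closure_Iio x ▸ self_mem_Iic)

section Dyadic

variable {R : Type*} [CommRing R] {r : ℕ} {u : R}

/-- `k / r ^ m` for `p = (k, m)`, written as `k * u ^ m` with `u = 1 / r` so that it makes sense
in any ring. -/
def dyadic (u : R) (p : ℤ × ℕ) : R := p.1 * u ^ p.2

theorem dyadic_add (hru : (r : R) * u = 1) (p q : ℤ × ℕ) :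
    dyadic u p + dyadic u q = dyadic u (p.1 * r ^ q.2 + q.1 * r ^ p.2, p.2 + q.2) := by
  have hpow (n : ℕ) : (r : R) ^ n * u ^ n = 1 := by rw [← mul_pow, hru, one_pow]
  simp only [dyadic]
  push_cast
  linear_combination (-(p.1 : R) * u ^ p.2) * hpow q.2 - (q.1 : R) * u ^ q.2 * hpow p.2

theorem dyadic_sub (hru : (r : R) * u = 1) (p q : ℤ × ℕ) :
    dyadic u q - dyadic u p = dyadic u (q.1 * r ^ p.2 - p.1 * r ^ q.2, q.2 + p.2) := by
  rw [sub_eq_add_neg, show -dyadic u p = dyadic u (-p.1, p.2) by simp [dyadic], dyadic_add hru]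
  simp [sub_eq_add_neg]

theorem natCast_pow_mul_dyadic (hru : (r : R) * u = 1) (k : ℤ) (m : ℕ) :
    (r : R) ^ m * dyadic u (k, m) = k := by
  rw [dyadic, mul_left_comm, ← mul_pow, hru, one_pow, mul_one]

theorem dyadic_real_nonneg_iff (hr : 0 < r) {p : ℤ × ℕ} : 0 ≤ dyadic (r : ℝ)⁻¹ p ↔ 0 ≤ p.1 := by
  rw [dyadic, mul_nonneg_iff_of_pos_right (by positivity), Int.cast_nonneg_iff]

theorem denseRange_dyadic (hr : 1 < r) : DenseRange (dyadic (r : ℝ)⁻¹) := by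
  have hr' : (1 : ℝ) < r := by exact_mod_cast hr
  refine dense_of_exists_between fun a b hab ↦ ?_
  obtain ⟨m, hm⟩ := pow_unbounded_of_one_lt (b - a)⁻¹ hr'
  have hrm : (0 : ℝ) < (r : ℝ) ^ m := by positivity
  have hm' : 1 < (r : ℝ) ^ m * (b - a) := by rwa [inv_lt_iff_one_lt_mul₀ (sub_pos.2 hab)] at hm
  refine ⟨dyadic (r : ℝ)⁻¹ (⌊a * r ^ m⌋ + 1, m), mem_range_self _, ?_, ?_⟩
  · rw [dyadic, inv_pow, ← div_eq_mul_inv, lt_div_iff₀ hrm]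
    push_cast
    exact Int.lt_floor_add_one _
  · rw [dyadic, inv_pow, ← div_eq_mul_inv, div_lt_iff₀ hrm]
    push_cast
    linarith [Int.floor_le (a * (r : ℝ) ^ m)]

end Dyadic

theorem AddMonoidHom.map_dyadic_mul {r : ℕ} (hr : r ≠ 0) {u : A} (hru : (r : A) * u = 1)
    (φ : A →+ ℝ) (p : ℤ × ℕ) (y : A) : φ (dyadic u p * y) = dyadic (r : ℝ)⁻¹ p * φ y := by
  have hy : y = (r ^ p.2 : ℕ) • (u ^ p.2 * y) := by
    rw [nsmul_eq_mul]; push_cast; rw [← mul_assoc, ← mul_pow, hru, one_pow, one_mul]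
  conv_rhs => rw [hy]
  rw [dyadic, dyadic, mul_assoc, ← zsmul_eq_mul, map_zsmul, map_nsmul, zsmul_eq_mul, nsmul_eq_mul,
    Nat.cast_pow, inv_pow, mul_assoc, inv_mul_cancel_left₀ (by positivity)]

theorem AddMonoidHom.map_mul_of_isArchimedean {B : Type*} [Ring B] {S : Subsemiring A}
    (hS : S.IsArchimedean) (φ : A →+ B) (h1 : φ 1 = 1)
    (hmul : ∀ s ∈ S, ∀ x, φ (s * x) = φ s * φ x) (a b : A) : φ (a * b) = φ a * φ b := by
  obtain ⟨n, s, hs, rfl⟩ := hS a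
  have hn (y : A) : φ (n * y) = n * φ y := by rw [← zsmul_eq_mul, map_zsmul, zsmul_eq_mul]
  have hn1 : φ n = n := by simpa [h1] using hn 1
  rw [add_mul, map_add, map_add, hmul s hs, hn, hn1, add_mul]

namespace Submodule

variable {S : Subsemiring A} {Q : Submodule S A} {r : ℕ} {u : A}

noncomputable def cut (Q : Submodule S A) (r : ℕ) (u : A) (x : A) : ℝ :=
  sInf (dyadic (r : ℝ)⁻¹ '' {p | dyadic u p - x ∈ Q})

namespace IsTotalProper

theorem dyadic_mem_iff (hQ : Q.IsTotalProper) (hd : S.WeaklyDivisibleBy r u) {p : ℤ × ℕ} :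
    dyadic u p ∈ Q ↔ 0 ≤ p.1 := by
  obtain ⟨k, m⟩ := p
  refine ⟨fun h ↦ ?_, fun h ↦ ?_⟩
  · by_contra! hk
    obtain ⟨n, rfl⟩ := Int.eq_negSucc_of_lt_zero hk
    have : (-1 : A) = (r ^ m : ℕ) * dyadic u (Int.negSucc n, m) + n := by
      rw [Nat.cast_pow, natCast_pow_mul_dyadic hd.natCast_mul, Int.cast_negSucc]; push_cast; ring
    exact hQ.neg_one_notMem (this ▸ add_mem (mul_mem_of_mem (natCast_mem S _) h)
      (mem_of_one_mem hQ.one_mem (natCast_mem S n)))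
  · lift k to ℕ using h
    exact mem_of_one_mem hQ.one_mem (mul_mem (by simp) (pow_mem hd.mem m))

theorem dyadic_sub_dyadic_mem_iff (hQ : Q.IsTotalProper) (hd : S.WeaklyDivisibleBy r u)
    {p q : ℤ × ℕ} : dyadic u q - dyadic u p ∈ Q ↔ dyadic (r : ℝ)⁻¹ p ≤ dyadic (r : ℝ)⁻¹ q := by
  have hr : (r : ℝ) * (r : ℝ)⁻¹ = 1 := mul_inv_cancel₀ (by simp [hd.pos.ne'])
  rw [← sub_nonneg, dyadic_sub hr, dyadic_sub hd.natCast_mul, dyadic_real_nonneg_iff hd.pos,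
    hQ.dyadic_mem_iff hd]

theorem exists_sub_dyadic_mem (hQ : Q.IsTotalProper) (hS : S.IsArchimedean) (x : A) :
    ∃ p, x - dyadic u p ∈ Q := by
  obtain ⟨n, t, ht, rfl⟩ := hS x
  exact ⟨(n, 0), by simpa [dyadic] using mem_of_one_mem hQ.one_mem ht⟩

theorem exists_dyadic_sub_mem (hQ : Q.IsTotalProper) (hS : S.IsArchimedean) (x : A) :
    ∃ p, dyadic u p - x ∈ Q := by
  obtain ⟨n, t, ht, hx⟩ := hS (-x)
  refine ⟨(-n, 0), ?_⟩
  rw [show dyadic u (-n, 0) - x = t by simp [dyadic]; linear_combination hx]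
  exact mem_of_one_mem hQ.one_mem ht

theorem dyadic_le_of_mem (hQ : Q.IsTotalProper) (hd : S.WeaklyDivisibleBy r u) {x : A}
    {p q : ℤ × ℕ} (hp : x - dyadic u p ∈ Q) (hq : dyadic u q - x ∈ Q) :
    dyadic (r : ℝ)⁻¹ p ≤ dyadic (r : ℝ)⁻¹ q :=
  (hQ.dyadic_sub_dyadic_mem_iff hd).1 (sub_add_sub_cancel _ x _ ▸ add_mem hq hp)

theorem cut_le (hQ : Q.IsTotalProper) (hS : S.IsArchimedean) (hd : S.WeaklyDivisibleBy r u)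
    {x : A} {p : ℤ × ℕ} (hp : dyadic u p - x ∈ Q) : Q.cut r u x ≤ dyadic (r : ℝ)⁻¹ p := by
  obtain ⟨p₀, hp₀⟩ := hQ.exists_sub_dyadic_mem hS x
  exact csInf_le ⟨_, forall_mem_image.2 fun _ ↦ hQ.dyadic_le_of_mem hd hp₀⟩
    (mem_image_of_mem _ hp)

theorem le_cut (hQ : Q.IsTotalProper) (hS : S.IsArchimedean) (hd : S.WeaklyDivisibleBy r u)
    {x : A} {p : ℤ × ℕ} (hp : x - dyadic u p ∈ Q) : dyadic (r : ℝ)⁻¹ p ≤ Q.cut r u x :=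
  le_csInf (Nonempty.image _ (hQ.exists_dyadic_sub_mem hS x))
    (forall_mem_image.2 fun _ ↦ hQ.dyadic_le_of_mem hd hp)

theorem dyadic_sub_mem_of_cut_lt (hQ : Q.IsTotalProper) (hS : S.IsArchimedean)
    (hd : S.WeaklyDivisibleBy r u) {x : A} {p : ℤ × ℕ} (hp : Q.cut r u x < dyadic (r : ℝ)⁻¹ p) :
    dyadic u p - x ∈ Q := by
  obtain ⟨_, ⟨q, hq, rfl⟩, hqp⟩ :=
    exists_lt_of_csInf_lt (Nonempty.image _ (hQ.exists_dyadic_sub_mem hS x)) hp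
  exact sub_add_sub_cancel _ (dyadic u q) x ▸
    add_mem ((hQ.dyadic_sub_dyadic_mem_iff hd).2 hqp.le) hq

theorem sub_dyadic_mem_of_lt_cut (hQ : Q.IsTotalProper) (hS : S.IsArchimedean)
    (hd : S.WeaklyDivisibleBy r u) {x : A} {p : ℤ × ℕ} (hp : dyadic (r : ℝ)⁻¹ p < Q.cut r u x) :
    x - dyadic u p ∈ Q :=
  (hQ.mem_or_neg_mem _).resolve_right fun h ↦
    (hQ.cut_le hS hd (neg_sub x (dyadic u p) ▸ h)).not_gt hp

theorem cut_nonneg (hQ : Q.IsTotalProper) (hS : S.IsArchimedean) (hd : S.WeaklyDivisibleBy r u)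
    {x : A} (hx : x ∈ Q) : 0 ≤ Q.cut r u x := by
  simpa [dyadic] using hQ.le_cut hS hd (p := (0, 0)) (by simpa [dyadic] using hx)

theorem cut_one (hQ : Q.IsTotalProper) (hS : S.IsArchimedean) (hd : S.WeaklyDivisibleBy r u) :
    Q.cut r u 1 = 1 := by
  have h0 : dyadic u (1, 0) - 1 ∈ Q := by simp [dyadic]
  have h0' : 1 - dyadic u (1, 0) ∈ Q := by simp [dyadic]
  simpa [dyadic] using le_antisymm (hQ.cut_le hS hd h0) (hQ.le_cut hS hd h0')

theorem cut_add (hQ : Q.IsTotalProper) (hS : S.IsArchimedean) (hd : S.WeaklyDivisibleBy r u)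
    (x y : A) : Q.cut r u (x + y) = Q.cut r u x + Q.cut r u y := by
  have hr : (r : ℝ) * (r : ℝ)⁻¹ = 1 := mul_inv_cancel₀ (by simp [hd.pos.ne'])
  have hD := denseRange_dyadic hd.one_lt
  apply le_antisymm
  · refine hD.mem_of_forall_gt (s := {a | _ ≤ a + _})
      (isClosed_le continuous_const (continuous_add_const _)) fun p hp ↦ ?_
    refine hD.mem_of_forall_gt (s := {b | _ ≤ _ + b})
      (isClosed_le continuous_const (continuous_const_add _)) fun q hq ↦ ?_
    rw [mem_ofPred_eq, dyadic_add hr]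
    refine hQ.cut_le hS hd ?_
    rw [← dyadic_add hd.natCast_mul, add_sub_add_comm]
    exact add_mem (hQ.dyadic_sub_mem_of_cut_lt hS hd hp) (hQ.dyadic_sub_mem_of_cut_lt hS hd hq)
  · refine hD.mem_of_forall_lt (s := {a | a + _ ≤ _})
      (isClosed_le (continuous_add_const _) continuous_const) fun p hp ↦ ?_
    refine hD.mem_of_forall_lt (s := {b | _ + b ≤ _})
      (isClosed_le (continuous_const_add _) continuous_const) fun q hq ↦ ?_
    rw [mem_ofPred_eq, dyadic_add hr]
    refine hQ.le_cut hS hd ?_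
    rw [← dyadic_add hd.natCast_mul, add_sub_add_comm]
    exact add_mem (hQ.sub_dyadic_mem_of_lt_cut hS hd hp) (hQ.sub_dyadic_mem_of_lt_cut hS hd hq)

noncomputable def cutHom (hQ : Q.IsTotalProper) (hS : S.IsArchimedean)
    (hd : S.WeaklyDivisibleBy r u) : A →+ ℝ :=
  AddMonoidHom.mk' (Q.cut r u) (hQ.cut_add hS hd)

theorem cutHom_mul_of_mem (hQ : Q.IsTotalProper) (hS : S.IsArchimedean)
    (hd : S.WeaklyDivisibleBy r u) {s : A} (hs : s ∈ S) (x : A) :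
    hQ.cutHom hS hd (s * x) = hQ.cutHom hS hd s * hQ.cutHom hS hd x := by
  set φ := hQ.cutHom hS hd
  have hD := denseRange_dyadic hd.one_lt
  -- `s (d - x) ∈ Q` for dyadic `d` on either side of the cut of `x` bounds `φ (s x)` by `d φ s`.
  have hsd (p : ℤ × ℕ) : φ (s * (dyadic u p - x)) = dyadic (r : ℝ)⁻¹ p * φ s - φ (s * x) := by
    rw [mul_sub, map_sub, mul_comm s, φ.map_dyadic_mul hd.pos.ne' hd.natCast_mul]
  apply le_antisymm
  · refine hD.mem_of_forall_gt (s := {a | _ ≤ _ * a})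
      (isClosed_le continuous_const (continuous_const_mul _)) fun p hp ↦ ?_
    have : 0 ≤ φ (s * (dyadic u p - x)) :=
      hQ.cut_nonneg hS hd (mul_mem_of_mem hs (hQ.dyadic_sub_mem_of_cut_lt hS hd hp))
    rw [hsd] at this
    rw [mem_ofPred_eq]
    linarith [mul_comm (φ s) (dyadic (r : ℝ)⁻¹ p)]
  · refine hD.mem_of_forall_lt (s := {a | _ * a ≤ _})
      (isClosed_le (continuous_const_mul _) continuous_const) fun p hp ↦ ?_
    have : 0 ≤ φ (-(s * (dyadic u p - x))) := by
      rw [← mul_neg, neg_sub]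
      exact hQ.cut_nonneg hS hd (mul_mem_of_mem hs (hQ.sub_dyadic_mem_of_lt_cut hS hd hp))
    rw [map_neg, hsd] at this
    rw [mem_ofPred_eq]
    linarith [mul_comm (φ s) (dyadic (r : ℝ)⁻¹ p)]

theorem exists_ringHom_nonneg (hQ : Q.IsTotalProper) (hS : S.IsArchimedean)
    (hd : S.WeaklyDivisibleBy r u) : ∃ φ : A →+* ℝ, ∀ x ∈ Q, 0 ≤ φ x := by
  set φ := hQ.cutHom hS hd
  have h1 : φ 1 = 1 := hQ.cut_one hS hd
  refine ⟨{ φ with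
      map_one' := h1
      map_mul' := φ.map_mul_of_isArchimedean hS h1 fun s hs ↦ hQ.cutHom_mul_of_mem hS hd hs },
    fun x hx ↦ hQ.cut_nonneg hS hd hx⟩

end IsTotalProper

end Submodule

end

theorem real_representation_theorem (A : Type*) [CommRing A] (T : Set A)
    (h0 : (0 : A) ∈ T) (h1 : (1 : A) ∈ T)
    (hadd : ∀ x ∈ T, ∀ y ∈ T, x + y ∈ T)
    (hmul : ∀ x ∈ T, ∀ y ∈ T, x * y ∈ T)
    (harch : ∀ a : A, ∃ n : ℤ, ∃ t ∈ T, a = (n : A) + t)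
    (hdiv : ∃ r : ℕ, 2 ≤ r ∧ ∃ u : A, (r : A) * u = 1 ∧ u ∈ T)
    (a : A)
    (hpos : ∀ φ : A →+* ℝ, (∀ t ∈ T, 0 ≤ φ t) → 0 < φ a) :
    a ∈ T := by
  obtain ⟨r, hr, u, hru, hu⟩ := hdiv
  let S : Subsemiring A :=
    { carrier := T, zero_mem' := h0, one_mem' := h1
      add_mem' := fun hx hy ↦ hadd _ hx _ hy, mul_mem' := fun hx hy ↦ hmul _ hx _ hy }
  have hS : S.IsArchimedean := harch
  have hd : S.WeaklyDivisibleBy r u := ⟨hr, hru, hu⟩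
  by_contra ha
  have hP : (-1 : A) ∉ Submodule.span S {1, -a} := by
    rw [Submodule.mem_span_pair]
    rintro ⟨t₀, t₁, h⟩
    refine ha (hS.mem_of_mul_sub_one_mem hd t₁.2 ?_)
    rw [show (t₁ : A) * a - 1 = t₀ by
      simp only [Subsemiring.smul_def, smul_eq_mul] at h; linear_combination -h]
    exact t₀.2
  obtain ⟨Q, hPQ, hQmax⟩ := Submodule.exists_le_maximal_notMem hP
  have hQ := Submodule.isTotalProper_of_maximal hS (hPQ (Submodule.subset_span (by simp))) hQmax
  obtain ⟨φ, hφ⟩ := hQ.exists_ringHom_nonneg hS hd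
  have hφa := hφ (-a) (hPQ (Submodule.subset_span (by simp)))
  have := hpos φ fun t ht ↦ hφ t (Submodule.mem_of_one_mem hQ.one_mem ht)
  rw [map_neg] at hφa
  linarith
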